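/- Suppose q > μ and fix ε₁ ∈ ℝ. Set β := γ₂ − γ₁ and y := 1/β. For all real x, s with x ≥ ε₁ and ε₁ < s ≤ ε₁ + k*, define I₁ := ∫_{β(s−ε₁)}^{βk*} e^{u(1+y)}/(e^u − 1) du and I₂ := ∫_{β(s−ε₁)}^{βk*} e^{uy}/(e^u − 1) du. Then e^s · Z(x − ε₁) + e^{ε₁} · W(x − ε₁) · ∫_{s−ε₁}^{k*} e^t · Z(t)/W(t) dt = (e^{ε₁}/β) · ( e^{γ₂(x−ε₁)} · (I₂ − γ₁ e^{k*}) − e^{γ₁(x−ε₁)} · (I₁ − γ₂ e^{k*}) ). (This is the closed form of the value function U_{ε₁,∞} on the region C_I* ∪ D_I* in the problem with a lower cap and no upper cap.) -/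

import Mathlib

open Real Filter Set MeasureTheory

noncomputable def dlt (σ μ q : ℝ) : ℝ := Real.sqrt ((μ / σ ^ 2 - 1 / 2) ^ 2 + 2 * q / σ ^ 2)

noncomputable def gma (σ μ : ℝ) : ℝ := 1 / 2 - μ / σ ^ 2

noncomputable def gma1 (σ μ q : ℝ) : ℝ := gma σ μ - dlt σ μ q

noncomputable def gma2 (σ μ q : ℝ) : ℝ := gma σ μ + dlt σ μ q

/-- The scale function `W^{(q)}` of `X_t = (μ - σ²/2) t + σ B_t`. -/
noncomputable def W (σ μ q : ℝ) (x : ℝ) : ℝ :=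
  if 0 ≤ x then 2 / (σ ^ 2 * dlt σ μ q) * Real.exp (gma σ μ * x) * Real.sinh (dlt σ μ q * x)
  else 0

/-- The scale function `Z^{(q)}` of `X_t = (μ - σ²/2) t + σ B_t`. -/
noncomputable def Z (σ μ q : ℝ) (x : ℝ) : ℝ :=
  if 0 ≤ x then
    Real.exp (gma σ μ * x) * Real.cosh (dlt σ μ q * x)
      - gma σ μ / dlt σ μ q * Real.exp (gma σ μ * x) * Real.sinh (dlt σ μ q * x)
  else 1

/-- `k* = (γ₂ - γ₁)⁻¹ log((1 - 1/γ₁)/(1 - 1/γ₂))`. -/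
noncomputable def kstar (σ μ q : ℝ) : ℝ :=
  (gma2 σ μ q - gma1 σ μ q)⁻¹ *
    Real.log ((1 - 1 / gma1 σ μ q) / (1 - 1 / gma2 σ μ q))

/-!
On `[0, ∞)` both scale functions are combinations of `e^{γ₁x}` and `e^{γ₂x}`, so with
`β = γ₂ - γ₁` a partial fraction decomposition in `e^{βt}` gives, for `x ≥ 0` and `t > 0`,
`W(x) Z(t) / W(t) = (e^{γ₂x} - e^{γ₁x} e^{βt}) / (e^{βt} - 1) + Z(x)`.
Integrating this against `e^t` over `[s - ε₁, k*]` and substituting `u = βt` gives the closed form.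
-/

section ScaleFunctions

variable {σ μ q : ℝ}

lemma dlt_pos (hσ : 0 < σ) (hq : 0 < q) : 0 < dlt σ μ q :=
  Real.sqrt_pos.2 (by positivity)

lemma gma2_sub_gma1 : gma2 σ μ q - gma1 σ μ q = 2 * dlt σ μ q := by
  unfold gma1 gma2; ring

lemma gma2_sub_gma1_pos (hσ : 0 < σ) (hq : 0 < q) : 0 < gma2 σ μ q - gma1 σ μ q := by
  rw [gma2_sub_gma1]; exact mul_pos two_pos (dlt_pos hσ hq)

lemma exp_gma1_mul (x : ℝ) :
    exp (gma1 σ μ q * x) = exp (gma σ μ * x) * exp (-(dlt σ μ q * x)) := by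
  rw [← exp_add, gma1]; ring_nf

lemma exp_gma2_mul (x : ℝ) :
    exp (gma2 σ μ q * x) = exp (gma σ μ * x) * exp (dlt σ μ q * x) := by
  rw [← exp_add, gma2]; ring_nf

lemma W_of_nonneg {x : ℝ} (hx : 0 ≤ x) :
    W σ μ q x = (exp (gma2 σ μ q * x) - exp (gma1 σ μ q * x)) / (σ ^ 2 * dlt σ μ q) := by
  rw [W, if_pos hx, sinh_eq, exp_gma1_mul, exp_gma2_mul]
  ring

lemma Z_of_nonneg (hδ : dlt σ μ q ≠ 0) {x : ℝ} (hx : 0 ≤ x) :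
    Z σ μ q x = (gma2 σ μ q * exp (gma1 σ μ q * x) - gma1 σ μ q * exp (gma2 σ μ q * x))
      / (gma2 σ μ q - gma1 σ μ q) := by
  rw [Z, if_pos hx, sinh_eq, cosh_eq, exp_gma1_mul, exp_gma2_mul, gma2_sub_gma1, gma1, gma2]
  field_simp
  ring

end ScaleFunctions

section Integrals

variable {β a b : ℝ}

lemma intervalIntegrable_div_exp_mul_sub_one (hβ : β ≠ 0) (ha : 0 < a) (hb : 0 < b)
    {f : ℝ → ℝ} (hf : Continuous f) :
    IntervalIntegrable (fun t => f t / (exp (β * t) - 1)) volume a b := by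
  refine ContinuousOn.intervalIntegrable <| hf.continuousOn.div
    (by fun_prop : Continuous _).continuousOn fun t ht => ?_
  have ht0 : t ≠ 0 := ((lt_inf_iff.2 ⟨ha, hb⟩).trans_le ht.1).ne'
  rw [sub_ne_zero, Ne, exp_eq_one_iff]
  exact mul_ne_zero hβ ht0

lemma integral_exp_mul_div_exp_sub_one_comp_mul (c : ℝ) :
    ∫ u in β * a..β * b, exp (u * c) / (exp u - 1)
      = β * ∫ t in a..b, exp (t * (β * c)) / (exp (β * t) - 1) := by
  rw [← intervalIntegral.smul_integral_comp_mul_left, smul_eq_mul]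
  simp only [mul_assoc, mul_left_comm β]

end Integrals

section ClosedForm

variable {σ μ q : ℝ}

local notation "γ₁" => gma1 σ μ q
local notation "γ₂" => gma2 σ μ q

lemma W_mul_exp_mul_Z_div_W (hσ : 0 < σ) (hq : 0 < q) {x t : ℝ} (hx : 0 ≤ x) (ht : 0 < t) :
    W σ μ q x * (exp t * Z σ μ q t / W σ μ q t)
      = exp (γ₂ * x) * (exp t / (exp ((γ₂ - γ₁) * t) - 1))
        - exp (γ₁ * x) * (exp (t * (γ₂ - γ₁ + 1)) / (exp ((γ₂ - γ₁) * t) - 1))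
        + exp t * Z σ μ q x := by
  have hδ := dlt_pos (μ := μ) hσ hq
  have hβ := (gma2_sub_gma1_pos (μ := μ) hσ hq).ne'
  have hlt : exp (γ₁ * t) < exp (γ₂ * t) := by
    rw [exp_lt_exp, ← sub_pos, ← sub_mul]; exact mul_pos (gma2_sub_gma1_pos hσ hq) ht
  have hβt : exp ((γ₂ - γ₁) * t) = exp (γ₂ * t) / exp (γ₁ * t) := by
    rw [← exp_sub]; ring_nf
  have hβt₁ : exp (t * (γ₂ - γ₁ + 1)) = exp t * (exp (γ₂ * t) / exp (γ₁ * t)) := by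
    rw [← hβt, ← exp_add]; ring_nf
  have hne : exp (γ₂ * t) - exp (γ₁ * t) ≠ 0 := (sub_pos.2 hlt).ne'
  rw [W_of_nonneg hx, W_of_nonneg ht.le, Z_of_nonneg hδ.ne' hx, Z_of_nonneg hδ.ne' ht.le,
    hβt, hβt₁]
  field_simp
  ring

lemma W_mul_integral_exp_mul_Z_div_W (hσ : 0 < σ) (hq : 0 < q) {x a b : ℝ} (hx : 0 ≤ x)
    (ha : 0 < a) (hb : 0 < b) :
    W σ μ q x * ∫ t in a..b, exp t * Z σ μ q t / W σ μ q t
      = exp (γ₂ * x) * (∫ t in a..b, exp t / (exp ((γ₂ - γ₁) * t) - 1))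
        - exp (γ₁ * x) * (∫ t in a..b, exp (t * (γ₂ - γ₁ + 1)) / (exp ((γ₂ - γ₁) * t) - 1))
        + (exp b - exp a) * Z σ μ q x := by
  have hβ := (gma2_sub_gma1_pos (μ := μ) hσ hq).ne'
  have h₂ := intervalIntegrable_div_exp_mul_sub_one hβ ha hb continuous_exp
  have h₁ := intervalIntegrable_div_exp_mul_sub_one hβ ha hb
    (f := fun t => exp (t * (γ₂ - γ₁ + 1))) (by fun_prop)
  rw [← intervalIntegral.integral_const_mul, intervalIntegral.integral_congr fun t ht =>
      W_mul_exp_mul_Z_div_W hσ hq hx ((lt_inf_iff.2 ⟨ha, hb⟩).trans_le ht.1),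
    intervalIntegral.integral_add ((h₂.const_mul _).sub (h₁.const_mul _))
      (intervalIntegral.intervalIntegrable_exp.mul_const _),
    intervalIntegral.integral_sub (h₂.const_mul _) (h₁.const_mul _),
    intervalIntegral.integral_const_mul, intervalIntegral.integral_const_mul,
    intervalIntegral.integral_mul_const, integral_exp]

lemma exp_mul_Z_add_W_mul_integral (hσ : 0 < σ) (hq : 0 < q) {x a b : ℝ} (hx : 0 ≤ x)
    (ha : 0 < a) (hb : 0 < b) :
    exp a * Z σ μ q x + W σ μ q x * ∫ t in a..b, exp t * Z σ μ q t / W σ μ q t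
      = 1 / (γ₂ - γ₁) *
          (exp (γ₂ * x) * ((∫ u in (γ₂ - γ₁) * a..(γ₂ - γ₁) * b,
              exp (u * (1 / (γ₂ - γ₁))) / (exp u - 1)) - γ₁ * exp b)
          - exp (γ₁ * x) * ((∫ u in (γ₂ - γ₁) * a..(γ₂ - γ₁) * b,
              exp (u * (1 + 1 / (γ₂ - γ₁))) / (exp u - 1)) - γ₂ * exp b)) := by
  have hδ := dlt_pos (μ := μ) hσ hq
  have hβ := (gma2_sub_gma1_pos (μ := μ) hσ hq).ne'
  rw [integral_exp_mul_div_exp_sub_one_comp_mul, integral_exp_mul_div_exp_sub_one_comp_mul,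
    mul_add _ 1, mul_one_div_cancel hβ, mul_one]
  simp only [mul_one]
  rw [W_mul_integral_exp_mul_Z_div_W hσ hq hx ha hb, Z_of_nonneg hδ.ne' hx]
  generalize ∫ t in a..b, exp t / (exp ((γ₂ - γ₁) * t) - 1) = I₂
  generalize ∫ t in a..b, exp (t * (γ₂ - γ₁ + 1)) / (exp ((γ₂ - γ₁) * t) - 1) = I₁
  field_simp
  ring

end ClosedForm

theorem stmt_19_general (σ μ q ε₁ : ℝ) (hσ : 0 < σ) (hq : 0 < q)
    (x s : ℝ) (hx : ε₁ ≤ x) (hs₁ : ε₁ < s) (hs₂ : s ≤ ε₁ + kstar σ μ q) :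
    Real.exp s * Z σ μ q (x - ε₁)
      + Real.exp ε₁ * W σ μ q (x - ε₁) *
          ∫ t in (s - ε₁)..(kstar σ μ q), Real.exp t * Z σ μ q t / W σ μ q t
      = Real.exp ε₁ / (gma2 σ μ q - gma1 σ μ q) *
          (Real.exp (gma2 σ μ q * (x - ε₁)) *
            ((∫ u in ((gma2 σ μ q - gma1 σ μ q) * (s - ε₁))..
                ((gma2 σ μ q - gma1 σ μ q) * kstar σ μ q),
                Real.exp (u * (1 / (gma2 σ μ q - gma1 σ μ q))) / (Real.exp u - 1))
              - gma1 σ μ q * Real.exp (kstar σ μ q))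
          - Real.exp (gma1 σ μ q * (x - ε₁)) *
            ((∫ u in ((gma2 σ μ q - gma1 σ μ q) * (s - ε₁))..
                ((gma2 σ μ q - gma1 σ μ q) * kstar σ μ q),
                Real.exp (u * (1 + 1 / (gma2 σ μ q - gma1 σ μ q))) / (Real.exp u - 1))
              - gma2 σ μ q * Real.exp (kstar σ μ q))) := by
  have hs : exp s = exp ε₁ * exp (s - ε₁) := by rw [← exp_add, add_sub_cancel]
  rw [hs, mul_assoc (exp ε₁), mul_assoc (exp ε₁), ← mul_add,
    exp_mul_Z_add_W_mul_integral hσ hq (sub_nonneg.2 hx) (sub_pos.2 hs₁) (by linarith)]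
  ring

theorem stmt_19 (σ μ q ε₁ : ℝ) (hσ : 0 < σ) (hq : 0 < q) (hqμ : μ < q)
    (x s : ℝ) (hx : ε₁ ≤ x) (hs₁ : ε₁ < s) (hs₂ : s ≤ ε₁ + kstar σ μ q) :
    Real.exp s * Z σ μ q (x - ε₁)
      + Real.exp ε₁ * W σ μ q (x - ε₁) *
          ∫ t in (s - ε₁)..(kstar σ μ q), Real.exp t * Z σ μ q t / W σ μ q t
      = Real.exp ε₁ / (gma2 σ μ q - gma1 σ μ q) *
          (Real.exp (gma2 σ μ q * (x - ε₁)) *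
            ((∫ u in ((gma2 σ μ q - gma1 σ μ q) * (s - ε₁))..
                ((gma2 σ μ q - gma1 σ μ q) * kstar σ μ q),
                Real.exp (u * (1 / (gma2 σ μ q - gma1 σ μ q))) / (Real.exp u - 1))
              - gma1 σ μ q * Real.exp (kstar σ μ q))
          - Real.exp (gma1 σ μ q * (x - ε₁)) *
            ((∫ u in ((gma2 σ μ q - gma1 σ μ q) * (s - ε₁))..
                ((gma2 σ μ q - gma1 σ μ q) * kstar σ μ q),
                Real.exp (u * (1 + 1 / (gma2 σ μ q - gma1 σ μ q))) / (Real.exp u - 1))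
              - gma2 σ μ q * Real.exp (kstar σ μ q))) :=
  stmt_19_general σ μ q ε₁ hσ hq x s hx hs₁ hs₂
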